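/- Let S₀, S₁, … be a saturation with respect to the PaRC calculus. Suppose (C ⋈ R) ∈ S_i, θ is a substitution grounding for C, and θ ⊨ R. Then the ground clause Cθ is redundant with respect to S_i*. -/

import Mathlib

set_option autoImplicit false

namespace PaRC

/-- First-order terms over a signature `F` with arity function `ar`;
variables are natural numbers. -/
inductive Trm (F : Type) (ar : F → ℕ) : Type
  | var : ℕ → Trm F ar
  | app : (f : F) → (Fin (ar f) → Trm F ar) → Trm F ar

variable {F : Type} {ar : F → ℕ}

/-- Substitutions. -/
abbrev Subst (F : Type) (ar : F → ℕ) : Type := ℕ → Trm F ar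

/-- Applying a substitution to a term. -/
def Trm.subst (σ : Subst F ar) : Trm F ar → Trm F ar
  | .var x => σ x
  | .app f a => .app f (fun i => (a i).subst σ)

/-- Composition of substitutions. -/
def Subst.comp (σ τ : Subst F ar) : Subst F ar := fun x => Trm.subst τ (σ x)

/-- A term is ground if it contains no variables. -/
def Trm.IsGround : Trm F ar → Prop
  | .var _ => False
  | .app _ a => ∀ i, (a i).IsGround

/-- Free variables of a term. -/
def Trm.fvars : Trm F ar → Set ℕ
  | .var x => {x}
  | .app _ a => ⋃ i, (a i).fvars

/-- Subterm at a position (list of argument indices). -/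
def Trm.atPos : Trm F ar → List ℕ → Option (Trm F ar)
  | t, [] => some t
  | .var _, _ :: _ => none
  | .app f a, i :: p => if h : i < ar f then Trm.atPos (a ⟨i, h⟩) p else none

/-- Replace the subterm at a given position. -/
def Trm.replace : Trm F ar → List ℕ → Trm F ar → Trm F ar
  | _, [], u => u
  | .var x, _ :: _, _ => .var x
  | .app f a, i :: p, u =>
      if h : i < ar f then
        .app f (Function.update a ⟨i, h⟩ (Trm.replace (a ⟨i, h⟩) p u))
      else .app f a

/-- An equality literal: polarity together with the two sides. -/
structure Lit (F : Type) (ar : F → ℕ) : Type where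
  pos : Bool
  lhs : Trm F ar
  rhs : Trm F ar

def Lit.subst (σ : Subst F ar) (L : Lit F ar) : Lit F ar :=
  ⟨L.pos, Trm.subst σ L.lhs, Trm.subst σ L.rhs⟩

def Lit.IsGround (L : Lit F ar) : Prop := L.lhs.IsGround ∧ L.rhs.IsGround

def Lit.fvars (L : Lit F ar) : Set ℕ := L.lhs.fvars ∪ L.rhs.fvars

/-- A clause is a (finite) multiset of literals. -/
abbrev Clause (F : Type) (ar : F → ℕ) : Type := Multiset (Lit F ar)

def Clause.subst (σ : Subst F ar) (C : Clause F ar) : Clause F ar := C.map (Lit.subst σ)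

def Clause.IsGround (C : Clause F ar) : Prop := ∀ L ∈ C, L.IsGround

def Clause.fvars (C : Clause F ar) : Set ℕ := {x | ∃ L ∈ C, x ∈ L.fvars}

/-- A substitution is grounding for a clause if the instance is ground. -/
def GroundingFor (θ : Subst F ar) (C : Clause F ar) : Prop :=
  Clause.IsGround (Clause.subst θ C)

/-- A term occurs in a clause if it is a subterm of a side of one of its literals. -/
def OccursIn (u : Trm F ar) (C : Clause F ar) : Prop :=
  ∃ L ∈ C, ∃ p, Trm.atPos L.lhs p = some u ∨ Trm.atPos L.rhs p = some u

/-! ### Semantics: Σ-algebras, entailment and satisfiability -/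

/-- A Σ-algebra (first-order structure for the purely equational signature). -/
structure Alg (F : Type) (ar : F → ℕ) : Type 1 where
  carrier : Type
  nonempty : Nonempty carrier
  interp : (f : F) → (Fin (ar f) → carrier) → carrier

def Trm.eval (A : Alg F ar) (v : ℕ → A.carrier) : Trm F ar → A.carrier
  | .var x => v x
  | .app f a => A.interp f (fun i => (a i).eval A v)

def Lit.holds (A : Alg F ar) (v : ℕ → A.carrier) (L : Lit F ar) : Prop :=
  if L.pos then L.lhs.eval A v = L.rhs.eval A v else L.lhs.eval A v ≠ L.rhs.eval A v

/-- A clause is true in an algebra if it is true under every valuation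
(variables are implicitly universally quantified). -/
def Clause.validIn (A : Alg F ar) (C : Clause F ar) : Prop :=
  ∀ v : ℕ → A.carrier, ∃ L ∈ C, Lit.holds A v L

/-- First-order entailment between a set of clauses and a clause. -/
def Entails (S : Set (Clause F ar)) (D : Clause F ar) : Prop :=
  ∀ A : Alg F ar, (∀ C ∈ S, Clause.validIn A C) → Clause.validIn A D

/-- Satisfiability of a set of clauses. -/
def Satisfiable (S : Set (Clause F ar)) : Prop :=
  ∃ A : Alg F ar, ∀ C ∈ S, Clause.validIn A C

/-! ### Simplification orders and their bag extensions -/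

/-- A simplification order: a reduction ordering that is total on ground terms
and has the subterm property. -/
structure SimpOrd (F : Type) (ar : F → ℕ) : Type where
  gt : Trm F ar → Trm F ar → Prop
  trans : ∀ {s t u : Trm F ar}, gt s t → gt t u → gt s u
  irrefl : ∀ s : Trm F ar, ¬ gt s s
  wf : WellFounded (fun s t : Trm F ar => gt t s)
  substStable : ∀ (σ : Subst F ar) {s t : Trm F ar}, gt s t →
    gt (Trm.subst σ s) (Trm.subst σ t)
  ctxStable : ∀ (s : Trm F ar) (p : List ℕ) {l r : Trm F ar}, (Trm.atPos s p).isSome →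
    gt l r → gt (Trm.replace s p l) (Trm.replace s p r)
  subterm : ∀ {s t : Trm F ar} (p : List ℕ), Trm.atPos s p = some t → s ≠ t → gt s t
  totalGround : ∀ {s t : Trm F ar}, s.IsGround → t.IsGround → s ≠ t → gt s t ∨ gt t s

/-- Bag (Dershowitz–Manna multiset) extension of an ordering: `N > M`. -/
def MultGT {α : Type} (r : α → α → Prop) (N M : Multiset α) : Prop :=
  ∃ X Y Z : Multiset α, X ≠ 0 ∧ N = Z + X ∧ M = Z + Y ∧ ∀ y ∈ Y, ∃ x ∈ X, r x y

/-- The multiset of terms associated to a literal: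
`{s, t}` for `s ≈ t` and `{s, s, t, t}` for `s ≉ t`. -/
def Lit.ms (L : Lit F ar) : Multiset (Trm F ar) :=
  if L.pos then {L.lhs, L.rhs} else {L.lhs, L.lhs, L.rhs, L.rhs}

/-- The induced ordering on literals. -/
def litGT (O : SimpOrd F ar) (L M : Lit F ar) : Prop := MultGT O.gt L.ms M.ms

/-- The induced ordering on clauses. -/
def clauseGT (O : SimpOrd F ar) (C D : Clause F ar) : Prop := MultGT (litGT O) C D

def clauseGE (O : SimpOrd F ar) (C D : Clause F ar) : Prop := clauseGT O C D ∨ C = D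

/-- A ground clause `D` is redundant w.r.t. a set `S` of ground clauses if it is
entailed by finitely many clauses of `S` that are all smaller than `D`. -/
def Redundant (O : SimpOrd F ar) (S : Set (Clause F ar)) (D : Clause F ar) : Prop :=
  ∃ Cs : List (Clause F ar), (∀ C ∈ Cs, C ∈ S) ∧
    Entails {C | C ∈ Cs} D ∧ ∀ C ∈ Cs, clauseGT O D C

/-! ### Redundancy formulas and partial clauses -/

/-- Redundancy formulas: first-order formulas over the term algebra extended with
the interpreted predicates `≻` (the simplification order) and equality. -/
inductive RForm (F : Type) (ar : F → ℕ) : Type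
  | falsum : RForm F ar
  | verum : RForm F ar
  | eq (s t : Trm F ar) : RForm F ar
  | gt (s t : Trm F ar) : RForm F ar
  | and (a b : RForm F ar) : RForm F ar
  | or (a b : RForm F ar) : RForm F ar
  | ex (x : ℕ) (a : RForm F ar) : RForm F ar

def RForm.subst (σ : Subst F ar) : RForm F ar → RForm F ar
  | .falsum => .falsum
  | .verum => .verum
  | .eq s t => .eq (Trm.subst σ s) (Trm.subst σ t)
  | .gt s t => .gt (Trm.subst σ s) (Trm.subst σ t)
  | .and a b => .and (a.subst σ) (b.subst σ)
  | .or a b => .or (a.subst σ) (b.subst σ)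
  | .ex x a => .ex x (a.subst fun y => if y = x then Trm.var x else σ y)

def RForm.fvars : RForm F ar → Set ℕ
  | .falsum => ∅
  | .verum => ∅
  | .eq s t => s.fvars ∪ t.fvars
  | .gt s t => s.fvars ∪ t.fvars
  | .and a b => a.fvars ∪ b.fvars
  | .or a b => a.fvars ∪ b.fvars
  | .ex x a => a.fvars \ {x}

/-- Truth of a redundancy formula in the extended term algebra `T_R(Σ)`,
under a valuation `v` mapping variables to (ground) terms. -/
def RForm.realize (O : SimpOrd F ar) (v : Subst F ar) : RForm F ar → Prop
  | .falsum => False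
  | .verum => True
  | .eq s t => Trm.subst v s = Trm.subst v t
  | .gt s t => O.gt (Trm.subst v s) (Trm.subst v t)
  | .and a b => a.realize O v ∧ b.realize O v
  | .or a b => a.realize O v ∨ b.realize O v
  | .ex x a => ∃ g : Trm F ar, g.IsGround ∧ a.realize O (Function.update v x g)

/-- `σ ⊨ R`: every ground instance of `Rσ` is true in `T_R(Σ)`. -/
def RSat (O : SimpOrd F ar) (σ : Subst F ar) (R : RForm F ar) : Prop :=
  ∀ v : Subst F ar, (∀ x, (v x).IsGround) → RForm.realize O v (RForm.subst σ R)

theorem RForm.falsum_fvars_sub (s : Set ℕ) : RForm.fvars (.falsum : RForm F ar) ⊆ s := by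
  intro x hx; simp [RForm.fvars] at hx

/-- `s ⪰ t` as a redundancy formula. -/
def RForm.ge (s t : Trm F ar) : RForm F ar := .or (.gt s t) (.eq s t)

/-- `(s ≐ t) ⪰ l` as a redundancy formula. -/
def Lit.geForm (L : Lit F ar) (l : Trm F ar) : RForm F ar :=
  .or (RForm.ge L.lhs l) (RForm.ge L.rhs l)

/-- `(s ≐ t) ≻ l` as a redundancy formula. -/
def Lit.gtForm (L : Lit F ar) (l : Trm F ar) : RForm F ar :=
  .or (.gt L.lhs l) (.gt L.rhs l)

/-- `C ⪰ l` as a redundancy formula (disjunction over the literals of `C`). -/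
noncomputable def Clause.geForm (C : Clause F ar) (l : Trm F ar) : RForm F ar :=
  C.toList.foldr (fun L acc => RForm.or (Lit.geForm L l) acc) RForm.falsum

/-- `C ≻ l` as a redundancy formula (disjunction over the literals of `C`). -/
noncomputable def Clause.gtForm (C : Clause F ar) (l : Trm F ar) : RForm F ar :=
  C.toList.foldr (fun L acc => RForm.or (Lit.gtForm L l) acc) RForm.falsum

/-- A partial clause `C ⋈ R`: a clause together with a redundancy formula all of
whose free variables occur in the clause. -/
structure PClause (F : Type) (ar : F → ℕ) : Type where
  cl : Clause F ar
  rf : RForm F ar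
  hfv : RForm.fvars rf ⊆ Clause.fvars cl

/-- `⌊C ⋈ R⌋`: the ground instances `Cθ` with `θ ⊭ R`. -/
def pgnd (O : SimpOrd F ar) (pc : PClause F ar) : Set (Clause F ar) :=
  {D | ∃ θ : Subst F ar, D = Clause.subst θ pc.cl ∧ Clause.IsGround D ∧ ¬ RSat O θ pc.rf}

/-- `⌊S⌋` for a set of partial clauses. -/
def gndS (O : SimpOrd F ar) (S : Set (PClause F ar)) : Set (Clause F ar) :=
  ⋃ pc ∈ S, pgnd O pc

/-- `S*`: all ground instances of clauses occurring in `S`. -/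
def gstar (S : Set (PClause F ar)) : Set (Clause F ar) :=
  {D | ∃ pc ∈ S, ∃ θ : Subst F ar, D = Clause.subst θ pc.cl ∧ Clause.IsGround D}

/-! ### The PaRC calculus -/

def IsUnifier (σ : Subst F ar) (s t : Trm F ar) : Prop := Trm.subst σ s = Trm.subst σ t

def IsMGU (σ : Subst F ar) (s t : Trm F ar) : Prop :=
  IsUnifier σ s t ∧ ∀ η : Subst F ar, IsUnifier η s t → ∃ μ : Subst F ar, η = Subst.comp σ μ

/-- A literal selection function satisfying the standard condition w.r.t. `≻`. -/
structure SelFun (F : Type) (ar : F → ℕ) (O : SimpOrd F ar) : Type where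
  sel : Clause F ar → Set (Lit F ar)
  subset : ∀ C : Clause F ar, sel C ⊆ {L | L ∈ C}
  nonemptyOn : ∀ C : Clause F ar, C ≠ 0 → (sel C).Nonempty
  standard : ∀ C : Clause F ar,
    (∃ L ∈ sel C, L.pos = false) ∨ ∀ L ∈ sel C, ∀ M ∈ C, ¬ litGT O M L

/-- The inference rules of the PaRC calculus on partial clauses.
`Inf O sel prems σ concl` means: there is a PaRC inference with premises `prems`,
most general unifier `σ`, and conclusion `concl`; selected literals are the displayed
first literals of the premises. -/
inductive Inf (O : SimpOrd F ar) (sel : SelFun F ar O) :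
    List (PClause F ar) → Subst F ar → Clause F ar → Prop
  | sup {l r : Trm F ar} {C₁ : Clause F ar} {R₁ : RForm F ar}
      {h₁ : RForm.fvars R₁ ⊆ Clause.fvars (Lit.mk true l r ::ₘ C₁)}
      {b : Bool} {s t : Trm F ar} {C₂ : Clause F ar} {R₂ : RForm F ar}
      {h₂ : RForm.fvars R₂ ⊆ Clause.fvars (Lit.mk b s t ::ₘ C₂)}
      {p : List ℕ} {l' : Trm F ar} {σ : Subst F ar} :
      Trm.atPos s p = some l' →
      (∀ x, l' ≠ .var x) →
      IsMGU σ l l' →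
      Lit.mk true l r ∈ sel.sel (Lit.mk true l r ::ₘ C₁) →
      Lit.mk b s t ∈ sel.sel (Lit.mk b s t ::ₘ C₂) →
      ¬ RSat O σ (RForm.ge r l) →
      ¬ RSat O σ (RForm.ge t s) →
      ¬ RSat O σ (Clause.geForm C₁ l) →
      (b = true → ¬ RSat O σ (Clause.geForm C₂ s)) →
      ¬ RSat O σ R₁ →
      ¬ RSat O σ R₂ →
      Inf O sel [⟨Lit.mk true l r ::ₘ C₁, R₁, h₁⟩, ⟨Lit.mk b s t ::ₘ C₂, R₂, h₂⟩] σ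
        (Clause.subst σ (Lit.mk b (Trm.replace s p r) t ::ₘ (C₁ + C₂)))
  | eqres {s t : Trm F ar} {C : Clause F ar} {R : RForm F ar}
      {h : RForm.fvars R ⊆ Clause.fvars (Lit.mk false s t ::ₘ C)} {σ : Subst F ar} :
      IsMGU σ s t →
      Lit.mk false s t ∈ sel.sel (Lit.mk false s t ::ₘ C) →
      ¬ RSat O σ R →
      Inf O sel [⟨Lit.mk false s t ::ₘ C, R, h⟩] σ (Clause.subst σ C)
  | eqfac {s t s' t' : Trm F ar} {C : Clause F ar} {R : RForm F ar}
      {h : RForm.fvars R ⊆ Clause.fvars (Lit.mk true s t ::ₘ Lit.mk true s' t' ::ₘ C)}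
      {σ : Subst F ar} :
      IsMGU σ s s' →
      Lit.mk true s t ∈ sel.sel (Lit.mk true s t ::ₘ Lit.mk true s' t' ::ₘ C) →
      Lit.mk true s' t' ∈ sel.sel (Lit.mk true s t ::ₘ Lit.mk true s' t' ::ₘ C) →
      ¬ RSat O σ (RForm.ge t s) →
      ¬ RSat O σ (RForm.gt t' t) →
      ¬ RSat O σ (Clause.gtForm C s) →
      ¬ RSat O σ R →
      Inf O sel [⟨Lit.mk true s t ::ₘ Lit.mk true s' t' ::ₘ C, R, h⟩] σ
        (Clause.subst σ (Lit.mk true s t ::ₘ Lit.mk false t t' ::ₘ C))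

/-! ### Saturation -/

/-- A saturation w.r.t. the PaRC calculus: `S 0` consists of partial clauses of the
form `C ⋈ ⊥`, and each step is either an inference step or a redundancy step. -/
structure Saturation (O : SimpOrd F ar) (sel : SelFun F ar O) : Type where
  S : ℕ → Set (PClause F ar)
  init : ∀ pc ∈ S 0, pc.rf = RForm.falsum
  step : ∀ i : ℕ,
    (∃ (prems : List (PClause F ar)) (σ : Subst F ar) (concl : Clause F ar),
        (∀ pc ∈ prems, pc ∈ S i) ∧ Inf O sel prems σ concl ∧
        S (i + 1) = S i ∪ {⟨concl, RForm.falsum, RForm.falsum_fvars_sub _⟩}) ∨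
    (∃ pc ∈ S i, ∃ (R₂ : RForm F ar)
        (h : RForm.fvars (RForm.or pc.rf R₂) ⊆ Clause.fvars pc.cl),
        (∀ θ : Subst F ar, GroundingFor θ pc.cl → RSat O θ R₂ →
          Redundant O (gstar (S i)) (Clause.subst θ pc.cl)) ∧
        S (i + 1) = (S i \ {pc}) ∪ {⟨pc.cl, RForm.or pc.rf R₂, h⟩})

variable {O : SimpOrd F ar} {sel : SelFun F ar O}

/-- `S_ω = ⋃ i, S i`. -/
def Saturation.Somega (𝕊 : Saturation O sel) : Set (PClause F ar) := ⋃ i, 𝕊.S i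

/-- The limit `⋃_{i≥0} ⋂_{j≥i} ⌊S_j⌋` of a saturation. -/
def Saturation.limit (𝕊 : Saturation O sel) : Set (Clause F ar) :=
  ⋃ i : ℕ, ⋂ j : ℕ, ⋂ (_ : j ≥ i), gndS O (𝕊.S j)

/-- A ground clause is persistent if it belongs to the limit. -/
def Saturation.Persistent (𝕊 : Saturation O sel) (C : Clause F ar) : Prop := C ∈ 𝕊.limit

/-- Fairness of a saturation. -/
def Saturation.Fair (𝕊 : Saturation O sel) : Prop :=
  ∀ (prems : List (PClause F ar)) (σ : Subst F ar) (concl : Clause F ar) (ρ : Subst F ar),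
    Inf O sel prems σ concl →
    (∀ pc ∈ prems, 𝕊.Persistent (Clause.subst ρ (Clause.subst σ pc.cl))) →
    ∃ i : ℕ, (⟨concl, RForm.falsum, RForm.falsum_fvars_sub _⟩ : PClause F ar) ∈ 𝕊.S i

/-! ### Ground rewrite systems and the model construction -/

/-- One-step ground rewriting with a set of (ground) rewrite rules. -/
def Rw (I : Set (Trm F ar × Trm F ar)) (s t : Trm F ar) : Prop :=
  ∃ lr ∈ I, ∃ p : List ℕ, Trm.atPos s p = some lr.1 ∧ t = Trm.replace s p lr.2

def RwStar (I : Set (Trm F ar × Trm F ar)) : Trm F ar → Trm F ar → Prop :=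
  Relation.ReflTransGen (Rw I)

/-- A term is irreducible (a normal form) in `I`. -/
def NormalForm (I : Set (Trm F ar × Trm F ar)) (t : Trm F ar) : Prop := ∀ u, ¬ Rw I t u

/-- `s` and `t` have the same normal form in `I`. -/
def SameNF (I : Set (Trm F ar × Trm F ar)) (s t : Trm F ar) : Prop :=
  ∃ u : Trm F ar, RwStar I s u ∧ RwStar I t u ∧ NormalForm I u

/-- Truth of a ground clause in the interpretation given by a rewrite system. -/
def TrueIn (I : Set (Trm F ar × Trm F ar)) (C : Clause F ar) : Prop :=
  ∃ L ∈ C, if L.pos then SameNF I L.lhs L.rhs else ¬ SameNF I L.lhs L.rhs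

def NonOverlapping (I : Set (Trm F ar × Trm F ar)) : Prop :=
  ∀ lr ∈ I, ∀ lr' ∈ I, lr ≠ lr' → ∀ p : List ℕ, Trm.atPos (Prod.fst lr) p ≠ some (Prod.fst lr')

def Terminating (I : Set (Trm F ar × Trm F ar)) : Prop :=
  WellFounded (fun s t : Trm F ar => Rw I t s)

def Confluent (I : Set (Trm F ar × Trm F ar)) : Prop :=
  ∀ a b c : Trm F ar, RwStar I a b → RwStar I a c → ∃ d, RwStar I b d ∧ RwStar I c d

/-- The productivity condition of the model construction: there is a partial clause
`(l₁ ≈ r₁ ∨ C ⋈ R) ∈ S_ω` (with `l₁ ≈ r₁` selected) and a grounding substitution `θ`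
with `l₁θ = l`, `l₁θ ≻ r₁θ`, `l₁θ ≻ Cθ`, `θ ⊭ R`, `I_{≺l} ⊭ Cθ`, producing the rule
`l → rr` where `rr = r₁θ`. -/
def ProducesWith (O : SimpOrd F ar) (sel : SelFun F ar O) (Sω : Set (PClause F ar))
    (Ipre : Set (Trm F ar × Trm F ar)) (l rr : Trm F ar) : Prop :=
  ∃ (l₁ r₁ : Trm F ar) (C : Clause F ar) (R : RForm F ar)
    (h : RForm.fvars R ⊆ Clause.fvars (Lit.mk true l₁ r₁ ::ₘ C)) (θ : Subst F ar),
    (⟨Lit.mk true l₁ r₁ ::ₘ C, R, h⟩ : PClause F ar) ∈ Sω ∧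
    Lit.mk true l₁ r₁ ∈ sel.sel (Lit.mk true l₁ r₁ ::ₘ C) ∧
    GroundingFor θ (Lit.mk true l₁ r₁ ::ₘ C) ∧
    Trm.subst θ l₁ = l ∧
    O.gt (Trm.subst θ l₁) (Trm.subst θ r₁) ∧
    (∀ L ∈ Clause.subst θ C, O.gt (Trm.subst θ l₁) L.lhs ∧ O.gt (Trm.subst θ l₁) L.rhs) ∧
    ¬ RSat O θ R ∧
    ¬ TrueIn Ipre (Clause.subst θ C) ∧
    rr = Trm.subst θ r₁

/-- The rewrite system `I_l` of the model construction, defined by well-founded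
recursion on `≻`. -/
noncomputable def Interp (O : SimpOrd F ar) (sel : SelFun F ar O)
    (Sω : Set (PClause F ar)) : Trm F ar → Set (Trm F ar × Trm F ar) :=
  WellFounded.fix (C := fun _ => Set (Trm F ar × Trm F ar)) O.wf
    (fun l Irec =>
      let Ipre : Set (Trm F ar × Trm F ar) := ⋃ (r : Trm F ar), ⋃ (h : O.gt l r), Irec r h
      letI := Classical.propDecidable
      if h : NormalForm Ipre l ∧ ∃ rr, ProducesWith O sel Sω Ipre l rr then
        Ipre ∪ {(l, h.2.choose)}
      else Ipre)

/-- The rewrite system `I_{≺l}` of the model construction. -/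
noncomputable def IPre (O : SimpOrd F ar) (sel : SelFun F ar O)
    (Sω : Set (PClause F ar)) (l : Trm F ar) : Set (Trm F ar × Trm F ar) :=
  ⋃ (r : Trm F ar), ⋃ (_ : O.gt l r), Interp O sel Sω r

/-- The rewrite system `I_ω = ⋃_l I_l` of the model construction. -/
noncomputable def IOmega (O : SimpOrd F ar) (sel : SelFun F ar O)
    (Sω : Set (PClause F ar)) : Set (Trm F ar × Trm F ar) :=
  ⋃ (l : Trm F ar), Interp O sel Sω l

/-! The invariant is proved by induction on `i`. Partial clauses `C ⋈ ⊥` never satisfy their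
formula, because a constant of `Σ` provides a ground valuation, and `S_i*` only grows, so the one
interesting case is a redundancy step replacing `C ⋈ R₁` by `C ⋈ R₁ ∨ R₂`. Since `θ` grounds
every free variable of `R₁ ∨ R₂`, the formula `(R₁ ∨ R₂)θ` is closed, so its truth does not
depend on the valuation and `θ ⊨ R₁ ∨ R₂` splits into `θ ⊨ R₁` (induction hypothesis) or
`θ ⊨ R₂` (side condition of the step). -/

theorem Trm.fvars_eq_empty_of_isGround {t : Trm F ar} (h : t.IsGround) : t.fvars = ∅ := by
  induction t with
  | var x => exact h.elim
  | app f a ih =>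
    simp only [Trm.fvars, Set.iUnion_eq_empty]
    exact fun i => ih i (h i)

theorem Trm.IsGround.of_subst {θ : Subst F ar} {t : Trm F ar} {x : ℕ}
    (hx : x ∈ t.fvars) (h : (t.subst θ).IsGround) : (θ x).IsGround := by
  induction t with
  | var y =>
    rw [Trm.fvars, Set.mem_singleton_iff] at hx
    exact hx ▸ h
  | app f a ih =>
    obtain ⟨i, hi⟩ := Set.mem_iUnion.mp hx
    exact ih i hi (h i)

theorem Trm.subst_congr {v w : Subst F ar} {t : Trm F ar}
    (h : ∀ x ∈ t.fvars, v x = w x) : t.subst v = t.subst w := by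
  induction t with
  | var x => exact h x rfl
  | app f a ih =>
    simp only [Trm.subst]
    congr 1
    funext i
    exact ih i fun x hx => h x (Set.mem_iUnion.mpr ⟨i, hx⟩)

theorem Trm.exists_of_mem_fvars_subst {θ : Subst F ar} {t : Trm F ar} {x : ℕ}
    (hx : x ∈ (t.subst θ).fvars) : ∃ y ∈ t.fvars, x ∈ (θ y).fvars := by
  induction t with
  | var y => exact ⟨y, rfl, hx⟩
  | app f a ih =>
    obtain ⟨i, hi⟩ := Set.mem_iUnion.mp hx
    obtain ⟨y, hy, hxy⟩ := ih i hi
    exact ⟨y, Set.mem_iUnion.mpr ⟨i, hy⟩, hxy⟩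

theorem RForm.exists_of_mem_fvars_subst {φ : RForm F ar} {θ : Subst F ar} {x : ℕ}
    (hx : x ∈ (φ.subst θ).fvars) : ∃ y ∈ φ.fvars, x ∈ (θ y).fvars := by
  induction φ generalizing θ with
  | falsum | verum => simp [RForm.subst, RForm.fvars] at hx
  | eq s t | gt s t =>
    rcases hx with hx | hx
    · obtain ⟨y, hy, h⟩ := Trm.exists_of_mem_fvars_subst hx
      exact ⟨y, Or.inl hy, h⟩
    · obtain ⟨y, hy, h⟩ := Trm.exists_of_mem_fvars_subst hx
      exact ⟨y, Or.inr hy, h⟩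
  | and a b iha ihb | or a b iha ihb =>
    rcases hx with hx | hx
    · obtain ⟨y, hy, h⟩ := iha hx
      exact ⟨y, Or.inl hy, h⟩
    · obtain ⟨y, hy, h⟩ := ihb hx
      exact ⟨y, Or.inr hy, h⟩
  | ex z a ih =>
    obtain ⟨hx, hxz⟩ := hx
    obtain ⟨y, hy, h⟩ := ih hx
    by_cases hyz : y = z
    · rw [if_pos hyz] at h
      exact absurd (hyz ▸ h) hxz
    · rw [if_neg hyz] at h
      exact ⟨y, ⟨hy, hyz⟩, h⟩

theorem RForm.realize_congr {φ : RForm F ar} {v w : Subst F ar}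
    (h : ∀ x ∈ φ.fvars, v x = w x) : φ.realize O v ↔ φ.realize O w := by
  induction φ generalizing v w with
  | falsum | verum => exact Iff.rfl
  | eq s t | gt s t =>
    simp only [RForm.realize, Trm.subst_congr fun x hx => h x (Or.inl hx),
      Trm.subst_congr fun x hx => h x (Or.inr hx)]
  | and a b iha ihb =>
    exact and_congr (iha fun x hx => h x (Or.inl hx)) (ihb fun x hx => h x (Or.inr hx))
  | or a b iha ihb =>
    exact or_congr (iha fun x hx => h x (Or.inl hx)) (ihb fun x hx => h x (Or.inr hx))
  | ex z a ih =>
    refine exists_congr fun g => and_congr_right fun _ => ih fun x hx => ?_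
    by_cases hxz : x = z
    · simp [hxz]
    · simp only [Function.update_of_ne hxz]
      exact h x ⟨hx, hxz⟩

theorem exists_ground_valuation (hconst : ∃ c : F, ar c = 0) :
    ∃ v : Subst F ar, ∀ x, (v x).IsGround := by
  obtain ⟨c, hc⟩ := hconst
  exact ⟨fun _ => .app c fun i => absurd i.2 (by omega), fun _ i => absurd i.2 (by omega)⟩

theorem RSat.not_falsum (hconst : ∃ c : F, ar c = 0) {θ : Subst F ar} :
    ¬ RSat O θ (.falsum : RForm F ar) := by
  obtain ⟨v, hv⟩ := exists_ground_valuation hconst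
  exact fun h => h v hv

theorem rsat_iff_realize {θ : Subst F ar} {φ : RForm F ar}
    (hθ : ∀ y ∈ φ.fvars, (θ y).IsGround) {v : Subst F ar} (hv : ∀ x, (v x).IsGround) :
    RSat O θ φ ↔ (φ.subst θ).realize O v := by
  refine ⟨fun h => h v hv, fun h w _ => (RForm.realize_congr fun x hx => ?_).mp h⟩
  obtain ⟨y, hy, hxy⟩ := RForm.exists_of_mem_fvars_subst hx
  rw [Trm.fvars_eq_empty_of_isGround (hθ y hy)] at hxy
  exact hxy.elim

theorem RSat.or_elim (hconst : ∃ c : F, ar c = 0) {θ : Subst F ar} {a b : RForm F ar}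
    (hθ : ∀ y ∈ (RForm.or a b).fvars, (θ y).IsGround) (h : RSat O θ (.or a b)) :
    RSat O θ a ∨ RSat O θ b := by
  obtain ⟨v, hv⟩ := exists_ground_valuation hconst
  rcases (rsat_iff_realize hθ hv).mp h with h | h
  · exact .inl ((rsat_iff_realize (fun y hy => hθ y (.inl hy)) hv).mpr h)
  · exact .inr ((rsat_iff_realize (fun y hy => hθ y (.inr hy)) hv).mpr h)

theorem GroundingFor.isGround_of_mem_fvars {θ : Subst F ar} {C : Clause F ar}
    (h : GroundingFor θ C) {x : ℕ} (hx : x ∈ C.fvars) : (θ x).IsGround := by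
  obtain ⟨L, hL, hxL⟩ := hx
  have hg := h (L.subst θ) (Multiset.mem_map_of_mem _ hL)
  rcases hxL with hx | hx
  · exact Trm.IsGround.of_subst hx hg.1
  · exact Trm.IsGround.of_subst hx hg.2

theorem Redundant.mono {S T : Set (Clause F ar)} (hST : S ⊆ T) {D : Clause F ar}
    (h : Redundant O S D) : Redundant O T D := by
  obtain ⟨Cs, hCs, hent, hlt⟩ := h
  exact ⟨Cs, fun C hC => hST (hCs C hC), hent, hlt⟩

theorem gstar_mono {S T : Set (PClause F ar)} (hST : S ⊆ T) : gstar S ⊆ gstar T := by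
  rintro D ⟨pc, hpc, θ, hD, hg⟩
  exact ⟨pc, hST hpc, θ, hD, hg⟩

theorem gstar_subset_replace {S : Set (PClause F ar)} {pc pc' : PClause F ar}
    (hcl : pc'.cl = pc.cl) : gstar S ⊆ gstar (S \ {pc} ∪ {pc'}) := by
  rintro D ⟨pc₀, hpc₀, θ, hD, hg⟩
  by_cases h : pc₀ = pc
  · exact ⟨pc', .inr rfl, θ, hcl ▸ h ▸ hD, hg⟩
  · exact ⟨pc₀, .inl ⟨hpc₀, h⟩, θ, hD, hg⟩

theorem Saturation.gstar_subset_succ (𝕊 : Saturation O sel) (i : ℕ) :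
    gstar (𝕊.S i) ⊆ gstar (𝕊.S (i + 1)) := by
  rcases 𝕊.step i with ⟨_, _, _, _, _, hS⟩ | ⟨_, _, _, _, _, hS⟩
  · exact hS ▸ gstar_mono Set.subset_union_left
  · exact hS ▸ gstar_subset_replace rfl

theorem rsat_implies_redundant_general {F : Type} {ar : F → ℕ} (hconst : ∃ c : F, ar c = 0)
    (O : SimpOrd F ar) (sel : SelFun F ar O) (𝕊 : Saturation O sel)
    (i : ℕ) (pc : PClause F ar) (hpc : pc ∈ 𝕊.S i)
    (θ : Subst F ar) (hθ : GroundingFor θ pc.cl) (hsat : RSat O θ pc.rf) :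
    Redundant O (gstar (𝕊.S i)) (Clause.subst θ pc.cl) := by
  induction i generalizing pc with
  | zero => exact absurd (𝕊.init pc hpc ▸ hsat) (RSat.not_falsum hconst)
  | succ i ih =>
    have grow := 𝕊.gstar_subset_succ i
    rcases 𝕊.step i with ⟨_, _, _, _, _, hS⟩ | ⟨pc₀, hpc₀, R₂, hfv, hred, hS⟩
    · rcases hS ▸ hpc with hpc | rfl
      · exact (ih pc hpc hθ hsat).mono grow
      · exact absurd hsat (RSat.not_falsum hconst)
    · rcases hS ▸ hpc with hpc | rfl
      · exact (ih pc hpc.1 hθ hsat).mono grow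
      · rcases hsat.or_elim hconst fun y hy => hθ.isGround_of_mem_fvars (hfv hy) with h | h
        · exact (ih pc₀ hpc₀ hθ h).mono grow
        · exact (hred θ hθ h).mono grow

/-- If `(C ⋈ R) ∈ S i`, `θ` is grounding for `C` and `θ ⊨ R`,
then `Cθ` is redundant w.r.t. `S i *`. -/
theorem rsat_implies_redundant {F : Type} {ar : F → ℕ} (hF : Finite F) (hconst : ∃ c : F, ar c = 0)
    (O : SimpOrd F ar) (sel : SelFun F ar O) (𝕊 : Saturation O sel)
    (i : ℕ) (pc : PClause F ar) (hpc : pc ∈ 𝕊.S i)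
    (θ : Subst F ar) (hθ : GroundingFor θ pc.cl) (hsat : RSat O θ pc.rf) :
    Redundant O (gstar (𝕊.S i)) (Clause.subst θ pc.cl) :=
  rsat_implies_redundant_general hconst O sel 𝕊 i pc hpc θ hθ hsat

end PaRC
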